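/- arXiv:1403.4962 — 6 statements merged into one kernel-verified Lean document; each statement's English description precedes it below -/
import Mathlib

section
/- For all nonnegative integers n, i, k: C(n,i)·C(n+i,i)·C(n,k)·C(n+k,k) = Σ_{j=0}^{i+k} C(i+k,i)·M(j;i,k)·C(n,j)·C(n+j,j), where C denotes the usual binomial coefficient. -/
/-!
Write `A j = C(n,j) C(n+j,j)`. Then `(j+1)² A (j+1) = (n(n+1) - j(j+1)) A j`, so multiplication
by `n(n+1)` acts bidiagonally on the `A j`. By induction on `k`,
`(k+1)² A i A (k+1) = (n(n+1) - k(k+1)) A i A k`; expanding `A i A k` by the induction hypothesis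
and applying the bidiagonal relation again, the claim reduces to a Pascal-type recurrence in `k`
for the coefficients `C(i+k,i) M(j;i,k)`, which is checked on their factorial formula.
-/

/-- The multinomial coefficient `j!/((j-i)!(j-k)!(i+k-j)!)` when
`max i k ≤ j ≤ i+k`, and `0` otherwise. -/
def M (j i k : ℕ) : ℕ :=
  if i ≤ j ∧ k ≤ j ∧ j ≤ i + k then
    Nat.factorial j /
      (Nat.factorial (j - i) * Nat.factorial (j - k) * Nat.factorial (i + k - j))
  else 0

open Nat Finset

/-- Extended by zero to negative `m`, so that `invFact m = (m + 1) * invFact (m + 1)` holds for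
every integer `m`: the factorial formula for `M j i k` then holds for all `j`, and its recurrences
need no case split at the edges of the support. -/
def invFact : ℤ → ℚ
  | .ofNat m => (m ! : ℚ)⁻¹
  | .negSucc _ => 0

lemma invFact_natCast (m : ℕ) : invFact m = (m ! : ℚ)⁻¹ := rfl

lemma invFact_of_neg {m : ℤ} (hm : m < 0) : invFact m = 0 := by
  cases m with
  | ofNat p => exact absurd hm (by simp)
  | negSucc => rfl

lemma invFact_eq_mul_invFact_add_one (m : ℤ) : invFact m = (m + 1) * invFact (m + 1) := by
  rcases lt_trichotomy m (-1) with hm | rfl | hm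
  · rw [invFact_of_neg (by omega), invFact_of_neg (by omega), mul_zero]
  · norm_num [invFact_of_neg]
  · lift m + 1 to ℕ using (by omega) with p hp
    obtain ⟨q, rfl⟩ : ∃ q, p = q + 1 := ⟨p - 1, by omega⟩
    rw [show m = q by push_cast at hp; omega, invFact_natCast, invFact_natCast, factorial_succ]
    push_cast
    field_simp

lemma M_mul_factorials {j i k : ℕ} (hij : i ≤ j) (hkj : k ≤ j) (hj : j ≤ i + k) :
    M j i k * ((j - i)! * (j - k)! * (i + k - j)!) = j ! := by
  rw [M, if_pos ⟨hij, hkj, hj⟩]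
  refine Nat.div_mul_cancel ?_
  have hi : (j - k)! * (i + k - j)! ∣ i ! := by
    simpa [show j - k + (i + k - j) = i by omega] using
      factorial_mul_factorial_dvd_factorial_add (j - k) (i + k - j)
  have hj : (j - i)! * i ! ∣ j ! := by
    simpa [show j - i + i = j by omega] using factorial_mul_factorial_dvd_factorial_add (j - i) i
  rw [mul_assoc]
  exact (mul_dvd_mul_left _ hi).trans hj

lemma cast_M (j i k : ℕ) :
    (M j i k : ℚ) = j ! * invFact (j - i) * invFact (j - k) * invFact (i + k - j) := by
  by_cases h : i ≤ j ∧ k ≤ j ∧ j ≤ i + k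
  · obtain ⟨hij, hkj, hj⟩ := h
    have hM := congrArg (Nat.cast (R := ℚ)) (M_mul_factorials hij hkj hj)
    rw [← Nat.cast_sub hij, ← Nat.cast_sub hkj, ← Nat.cast_add, ← Nat.cast_sub hj,
      invFact_natCast, invFact_natCast, invFact_natCast, ← hM]
    push_cast
    field_simp
  · rw [M, if_neg h, Nat.cast_zero]
    have hneg : (j : ℤ) - i < 0 ∨ (j : ℤ) - k < 0 ∨ (i : ℤ) + k - j < 0 := by omega
    rcases hneg with hneg | hneg | hneg <;> simp [invFact_of_neg hneg]

def legendreCoeff (n j : ℕ) : ℚ := n.choose j * (n + j).choose j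

lemma legendreCoeff_zero (n : ℕ) : legendreCoeff n 0 = 1 := by simp [legendreCoeff]

lemma legendreCoeff_succ (n j : ℕ) :
    (j + 1) ^ 2 * legendreCoeff n (j + 1) = (n * (n + 1) - j * (j + 1)) * legendreCoeff n j := by
  have hchoose : (n.choose (j + 1) : ℚ) * (j + 1) = n.choose j * (n - j) := by
    rcases le_or_gt j n with h | h
    · have := congrArg (Nat.cast (R := ℚ)) (choose_succ_right_eq n j)
      push_cast [h] at this
      exact this
    · simp [choose_eq_zero_of_lt h, choose_eq_zero_of_lt (show n < j + 1 by omega)]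
  have hchoose_add : ((n + j + 1).choose (j + 1) : ℚ) * (j + 1)
      = (n + j + 1) * (n + j).choose j := by
    exact_mod_cast (add_one_mul_choose_eq (n + j) j).symm
  rw [legendreCoeff, legendreCoeff, ← add_assoc]
  linear_combination (j + 1 : ℚ) * ((n + j + 1).choose (j + 1) : ℚ) * hchoose
    + (n - j : ℚ) * (n.choose j : ℚ) * hchoose_add

def linCoeff (i k j : ℕ) : ℚ := (i + k).choose i * M j i k

lemma linCoeff_eq (i k j : ℕ) :
    linCoeff i k j = (i + k)! / (i ! * k !) * j !
      * invFact (j - i) * invFact (j - k) * invFact (i + k - j) := by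
  rw [linCoeff, cast_M, cast_add_choose]
  ring

lemma linCoeff_of_lt {i k j : ℕ} (h : i + k < j) : linCoeff i k j = 0 := by
  rw [linCoeff, M, if_neg (by omega)]
  simp

lemma linCoeff_zero_right (i j : ℕ) : linCoeff i 0 j = if j = i then 1 else 0 := by
  split_ifs with h
  · subst h
    simp [linCoeff, M, Nat.div_self (factorial_pos j)]
  · simp [linCoeff, M, show ¬ (i ≤ j ∧ j ≤ i) by omega]

lemma linCoeff_succ_zero (i k : ℕ) :
    (k + 1) ^ 2 * linCoeff i (k + 1) 0 = (0 - k * (k + 1)) * linCoeff i k 0 := by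
  have hk : (k : ℚ) * invFact (-k) = 0 := by
    have := invFact_eq_mul_invFact_add_one (-k - 1)
    rw [invFact_of_neg (by omega)] at this
    rcases (by simpa using this : k = 0 ∨ invFact (-k) = 0) with h | h <;> simp [h]
  simp only [linCoeff_eq, Nat.cast_zero, zero_sub, sub_zero, Nat.cast_add, Nat.cast_one,
    invFact_of_neg (show -((k : ℤ) + 1) < 0 by omega)]
  linear_combination (k + 1 : ℚ) * ((i + k)! / (i ! * k !) * invFact (-i) * invFact (i + k)) * hk

lemma linCoeff_succ_succ (i k j : ℕ) :
    (k + 1) ^ 2 * linCoeff i (k + 1) (j + 1)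
      = (j + 1) ^ 2 * linCoeff i k j
        + ((j + 1) * (j + 2) - k * (k + 1)) * linCoeff i k (j + 1) := by
  have shift (a b : ℤ) (h : b = a + 1) : invFact a = b * invFact b := by
    rw [h, Int.cast_add, Int.cast_one]
    exact invFact_eq_mul_invFact_add_one a
  simp only [linCoeff_eq]
  push_cast
  rw [shift (j - i) (j + 1 - i) (by ring), shift (j - k) (j + 1 - k) (by ring),
    shift (j + 1 - (k + 1)) (j + 1 - k) (by ring),
    shift (i + k - (j + 1)) (i + (k + 1) - (j + 1)) (by ring),
    show (i + k - j : ℤ) = i + (k + 1) - (j + 1) by ring,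
    show (i + (k + 1))! = (i + k + 1) * (i + k)! from factorial_succ _,
    factorial_succ k, factorial_succ j]
  push_cast
  field_simp
  ring

theorem legendreCoeff_mul_legendreCoeff (n i k : ℕ) :
    legendreCoeff n i * legendreCoeff n k
      = ∑ j ∈ range (i + k + 1), linCoeff i k j * legendreCoeff n j := by
  induction k with
  | zero => simp [linCoeff_zero_right, legendreCoeff_zero]
  | succ k ih =>
    have hk : ((k : ℚ) + 1) ^ 2 ≠ 0 := pow_ne_zero 2 k.cast_add_one_ne_zero
    have hshift := sum_range_succ' (fun j : ℕ =>
      ((j : ℚ) * (j + 1) - k * (k + 1)) * linCoeff i k j * legendreCoeff n j) (i + k + 1)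
    rw [sum_range_succ, linCoeff_of_lt (by omega), mul_zero, zero_mul, add_zero] at hshift
    push_cast at hshift
    refine mul_left_cancel₀ hk ?_
    rw [mul_sum]
    symm
    calc ∑ j ∈ range (i + (k + 1) + 1),
          ((k : ℚ) + 1) ^ 2 * (linCoeff i (k + 1) j * legendreCoeff n j)
        = ∑ j ∈ range (i + k + 1),
            ((k : ℚ) + 1) ^ 2 * linCoeff i (k + 1) (j + 1) * legendreCoeff n (j + 1)
          + ((k : ℚ) + 1) ^ 2 * linCoeff i (k + 1) 0 * legendreCoeff n 0 := by
          simp only [← add_assoc, sum_range_succ', mul_assoc]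
      _ = ∑ j ∈ range (i + k + 1),
            ((j : ℚ) + 1) ^ 2 * linCoeff i k j * legendreCoeff n (j + 1)
          + ∑ j ∈ range (i + k + 1),
              ((j : ℚ) * (j + 1) - k * (k + 1)) * linCoeff i k j * legendreCoeff n j := by
          rw [linCoeff_succ_zero, hshift, ← add_assoc, ← sum_add_distrib]
          congr 1
          · refine sum_congr rfl fun j _ => ?_
            rw [linCoeff_succ_succ]
            ring
          · ring
      _ = ∑ j ∈ range (i + k + 1),
            ((n : ℚ) * (n + 1) - k * (k + 1)) * (linCoeff i k j * legendreCoeff n j) := by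
          rw [← sum_add_distrib]
          refine sum_congr rfl fun j _ => ?_
          linear_combination linCoeff i k j * legendreCoeff_succ n j
      _ = ((n : ℚ) * (n + 1) - k * (k + 1)) * (legendreCoeff n i * legendreCoeff n k) := by
          rw [← mul_sum, ih]
      _ = ((k : ℚ) + 1) ^ 2 * (legendreCoeff n i * legendreCoeff n (k + 1)) := by
          linear_combination -legendreCoeff n i * legendreCoeff_succ n k

/-- Result 2.1.1. -/
theorem stmt_1 (n i k : ℕ) :
    n.choose i * (n + i).choose i * n.choose k * (n + k).choose k =
      ∑ j ∈ Finset.range (i + k + 1),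
        (i + k).choose i * M j i k * n.choose j * (n + j).choose j := by
  qify
  convert legendreCoeff_mul_legendreCoeff n i k using 1 <;>
    simp only [legendreCoeff, linCoeff, mul_assoc]
end

section
/- For all nonnegative integers n, i, k: C(n,i)·C(n,k) = Σ_{j=0}^{i+k} M(j;i,k)·C(n,j), where C denotes the usual binomial coefficient. -/
/-!
For `i ≤ n`, expand `C(n,k)` by Vandermonde over `n = (n - i) + i`. The term `C(n,i) C(n-i,b) C(i,a)`
equals `C(n,i+b) C(i+b,i) C(i,a)` by the subset-of-a-subset identity, and `C(i+b,i) C(i,a)` is the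
multinomial `M(i+b; i, k)`. Letting `j = i + b` gives the sum; the terms `j < i` vanish.
-/

open Finset

theorem M_eq_choose_mul_choose {j i k : ℕ} (hi : i ≤ j) (hk : k ≤ j) (hj : j ≤ i + k) :
    M j i k = j.choose i * i.choose (j - k) := by
  have hji : j - k ≤ i := by omega
  have hrest : i - (j - k) = i + k - j := by omega
  rw [M, if_pos ⟨hi, hk, hj⟩]
  apply Nat.div_eq_of_eq_mul_left (by positivity)
  rw [← Nat.choose_mul_factorial_mul_factorial hi,
    ← Nat.choose_mul_factorial_mul_factorial hji, hrest]
  ring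

theorem M_eq_zero_of_lt_left {j i k : ℕ} (h : j < i) : M j i k = 0 :=
  if_neg (by omega)

theorem M_eq_zero_of_lt_right {j i k : ℕ} (h : j < k) : M j i k = 0 :=
  if_neg (by omega)

theorem choose_mul_vandermonde_term (n i a b : ℕ) :
    n.choose i * ((n - i).choose b * i.choose a) = M (i + b) i (b + a) * n.choose (i + b) := by
  rcases le_or_gt a i with ha | ha
  · have hchoose : n.choose (i + b) * (i + b).choose i = n.choose i * (n - i).choose b := by
      simpa using Nat.choose_mul (n := n) (Nat.le_add_right i b)
    rw [M_eq_choose_mul_choose (by omega) (by omega) (by omega),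
      show i + b - (b + a) = i - a by omega, Nat.choose_symm ha, ← mul_assoc, ← hchoose]
    ring
  · rw [Nat.choose_eq_zero_of_lt ha, M_eq_zero_of_lt_right (by omega)]
    ring

theorem sum_range_M_mul_choose (n i k : ℕ) :
    ∑ j ∈ range (i + k + 1), M j i k * n.choose j =
      ∑ b ∈ range (k + 1), M (i + b) i k * n.choose (i + b) := by
  rw [← sum_range_add_sum_Ico _ (by omega : i ≤ i + k + 1),
    sum_eq_zero fun j hj => by rw [M_eq_zero_of_lt_left (mem_range.mp hj), zero_mul],
    zero_add, sum_Ico_eq_sum_range, show i + k + 1 - i = k + 1 by omega]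

/-- Result 2.2. -/
theorem stmt_3 (n i k : ℕ) :
    n.choose i * n.choose k = ∑ j ∈ Finset.range (i + k + 1), M j i k * n.choose j := by
  rcases lt_or_ge n i with hn | hi
  · rw [Nat.choose_eq_zero_of_lt hn, zero_mul, eq_comm]
    refine sum_eq_zero fun j _ => ?_
    rcases lt_or_ge j i with hj | hj
    · rw [M_eq_zero_of_lt_left hj, zero_mul]
    · rw [Nat.choose_eq_zero_of_lt (by omega), mul_zero]
  calc n.choose i * n.choose k
      = n.choose i * ∑ ab ∈ antidiagonal k, (n - i).choose ab.1 * i.choose ab.2 := by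
        rw [← Nat.add_choose_eq, Nat.sub_add_cancel hi]
    _ = ∑ ab ∈ antidiagonal k, M (i + ab.1) i k * n.choose (i + ab.1) := by
        rw [mul_sum]
        refine sum_congr rfl fun ab hab => ?_
        rw [choose_mul_vandermonde_term, mem_antidiagonal.mp hab]
    _ = ∑ j ∈ range (i + k + 1), M j i k * n.choose j := by
        rw [Nat.sum_antidiagonal_eq_sum_range_succ (fun b _ => M (i + b) i k * n.choose (i + b)),
          sum_range_M_mul_choose]
end

section
/- For every nonnegative integer k and every integer r ≥ 1 there exist integers a_{k,0}, a_{k,1}, …, a_{k,rk} such that for all nonnegative integers n: (C(n,k)·C(n+k,k))^r = Σ_{j=0}^{r·k} a_{k,j}·C(n,j)·C(n+j,j). -/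
/-!
Write `B(n,m) = C(n,m) C(n+m,m)` and `x = n(n+1)`. Since
`(m+1)² B(n,m+1) = (x - m(m+1)) B(n,m)`, `B(n,m)` is a polynomial of degree `m` in `x`, and the
product of two of these expands in the basis `B(n,·)` with integer coefficients:
`B(n,j) B(n,k) = ∑ₘ C(m,j) C(m,k) C(j+k,m) B(n,m)`.
This is proved by induction on `k`: multiplying by `x - k(k+1)` moves `B(n,k)` to `B(n,k+1)` on
the left, and on the right it amounts to a three-term recurrence of the coefficients, which are
then matched up by a telescoping sum. Multiplying by `B(n,k)` `r` times expands `B(n,k)^r`.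
-/

open Finset

def chooseProd (n m : ℕ) : ℤ := n.choose m * (n + m).choose m

def expansionCoeff (j k m : ℕ) : ℤ := m.choose j * m.choose k * (j + k).choose m

lemma cast_succ_mul_choose_succ (a b : ℕ) :
    ((b : ℤ) + 1) * a.choose (b + 1) = ((a : ℤ) - b) * a.choose b := by
  rcases le_or_gt b a with h | h
  · have := Nat.choose_succ_right_eq a b
    zify [h] at this
    linarith
  · simp [Nat.choose_eq_zero_of_lt h, Nat.choose_eq_zero_of_lt (h.trans b.lt_succ_self)]

lemma cast_succ_sub_mul_choose (a b : ℕ) :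
    ((a : ℤ) + 1 - b) * (a + 1).choose b = ((a : ℤ) + 1) * a.choose b := by
  rcases le_or_gt b (a + 1) with h | h
  · have := Nat.choose_mul_succ_eq a b
    zify [h] at this
    linarith
  · simp [Nat.choose_eq_zero_of_lt h, Nat.choose_eq_zero_of_lt (h.trans' a.lt_succ_self)]

lemma chooseProd_succ (n m : ℕ) :
    ((m : ℤ) + 1) ^ 2 * chooseProd n (m + 1) =
      ((n : ℤ) * (n + 1) - m * (m + 1)) * chooseProd n m := by
  have hn := cast_succ_mul_choose_succ n m
  have hnm : ((m : ℤ) + 1) * (n + m + 1).choose (m + 1) = ((n : ℤ) + m + 1) * (n + m).choose m := by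
    rw [mul_comm]
    exact_mod_cast (Nat.add_one_mul_choose_eq (n + m) m).symm
  rw [chooseProd, chooseProd, ← add_assoc]
  linear_combination ((m : ℤ) + 1) * (n + m + 1).choose (m + 1) * hn
    + ((n : ℤ) - m) * n.choose m * hnm

lemma expansionCoeff_succ (j k s : ℕ) :
    ((k : ℤ) + 1) ^ 2 * expansionCoeff j (k + 1) (s + 1) =
      ((s : ℤ) + 1) ^ 2 * expansionCoeff j k s
        + (((s : ℤ) + 1) * (s + 2) - k * (k + 1)) * expansionCoeff j k (s + 1) := by
  have hk := cast_succ_mul_choose_succ (s + 1) k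
  have hjk := cast_succ_mul_choose_succ (j + k) s
  have hk' := cast_succ_sub_mul_choose s k
  have hj' := cast_succ_sub_mul_choose s j
  have pascal :
      (((j + k + 1).choose (s + 1) : ℕ) : ℤ) = (j + k).choose s + (j + k).choose (s + 1) := by
    exact_mod_cast Nat.choose_succ_succ (j + k) s
  push_cast at hk hjk
  rw [expansionCoeff, expansionCoeff, expansionCoeff, ← add_assoc]
  linear_combination
    ((k : ℤ) + 1) ^ 2 * (s + 1).choose j * (s + 1).choose (k + 1) * pascal
    + ((k : ℤ) + 1) * (s + 1).choose j * ((j + k).choose (s + 1) + (j + k).choose s) * hk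
    + (((k : ℤ) + 1) * (s + 1).choose j * (j + k).choose s
        - ((s : ℤ) + 1) * (s + 1).choose j * (j + k).choose (s + 1)) * hk'
    - ((s : ℤ) + 1) * (s + 1).choose j * s.choose k * hjk
    + ((s : ℤ) + 1) * s.choose k * (j + k).choose s * hj'

lemma expansionCoeff_eq_zero_of_lt {j k m : ℕ} (h : j + k < m) : expansionCoeff j k m = 0 := by
  simp [expansionCoeff, Nat.choose_eq_zero_of_lt h]

theorem chooseProd_mul_chooseProd (n j k : ℕ) :
    chooseProd n j * chooseProd n k =
      ∑ m ∈ range (j + k + 1), expansionCoeff j k m * chooseProd n m := by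
  induction k with
  | zero =>
    rw [sum_range_succ, sum_eq_zero fun m hm => ?_]
    · simp [expansionCoeff, chooseProd]
    · simp [expansionCoeff, Nat.choose_eq_zero_of_lt (mem_range.1 hm)]
  | succ k ih =>
    set N := j + k + 1
    set v : ℕ → ℤ := fun m =>
      ((m : ℤ) * (m + 1) - k * (k + 1)) * expansionCoeff j k m * chooseProd n m
    have hv : v N = v 0 := by
      have hN : v N = 0 := by simp [v, expansionCoeff_eq_zero_of_lt (show j + k < N by omega)]
      have h0 : v 0 = 0 := by rcases k with _ | k <;> simp [v, expansionCoeff]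
      rw [hN, h0]
    have lhs : ((k : ℤ) + 1) ^ 2 * (chooseProd n j * chooseProd n (k + 1)) =
        ∑ m ∈ range N, (((m : ℤ) + 1) ^ 2 * expansionCoeff j k m * chooseProd n (m + 1) + v m) := by
      rw [mul_left_comm, chooseProd_succ, mul_left_comm, ih, mul_sum]
      refine sum_congr rfl fun m _ => ?_
      linear_combination -expansionCoeff j k m * chooseProd_succ n m
    have rhs : ((k : ℤ) + 1) ^ 2 *
          ∑ m ∈ range (j + (k + 1) + 1), expansionCoeff j (k + 1) m * chooseProd n m =
        ∑ m ∈ range N,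
          (((m : ℤ) + 1) ^ 2 * expansionCoeff j k m * chooseProd n (m + 1) + v (m + 1)) := by
      rw [mul_sum, show j + (k + 1) + 1 = N + 1 by omega, sum_range_succ',
        show expansionCoeff j (k + 1) 0 = 0 by simp [expansionCoeff], zero_mul, mul_zero, add_zero]
      refine sum_congr rfl fun m _ => ?_
      simp only [v]
      push_cast
      linear_combination chooseProd n (m + 1) * expansionCoeff_succ j k m
    apply mul_left_cancel₀ (pow_ne_zero 2 (by positivity : ((k : ℤ) + 1) ≠ 0))
    rw [lhs, rhs, ← sub_eq_zero, ← neg_eq_zero, neg_sub, ← sum_sub_distrib]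
    simp only [add_sub_add_left_eq_sub, sum_range_sub, hv, sub_self]

lemma chooseProd_mul_chooseProd_of_lt (n : ℕ) {j k N : ℕ} (h : j + k < N) :
    chooseProd n j * chooseProd n k = ∑ m ∈ range N, expansionCoeff j k m * chooseProd n m := by
  rw [chooseProd_mul_chooseProd]
  refine sum_subset (range_subset_range.2 h) fun m _ hm => ?_
  rw [expansionCoeff_eq_zero_of_lt (by simpa using hm), zero_mul]

def IsChooseProdComb (f : ℕ → ℤ) (d : ℕ) : Prop :=
  ∃ a : ℕ → ℤ, ∀ n, f n = ∑ j ∈ range (d + 1), a j * chooseProd n j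

lemma IsChooseProdComb.mul_chooseProd {f : ℕ → ℤ} {d : ℕ} (hf : IsChooseProdComb f d) (k : ℕ) :
    IsChooseProdComb (fun n => f n * chooseProd n k) (d + k) := by
  obtain ⟨a, ha⟩ := hf
  refine ⟨fun m => ∑ j ∈ range (d + 1), a j * expansionCoeff j k m, fun n => ?_⟩
  simp only [ha, sum_mul, mul_assoc]
  rw [sum_comm]
  refine sum_congr rfl fun j hj => ?_
  have hjk : j + k < d + k + 1 := by simp only [mem_range] at hj; omega
  rw [chooseProd_mul_chooseProd_of_lt n hjk, mul_sum]

theorem stmt_5_general (k r : ℕ) :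
    ∃ a : ℕ → ℤ, ∀ n : ℕ,
      ((n.choose k * (n + k).choose k : ℤ)) ^ r =
        ∑ j ∈ Finset.range (r * k + 1),
          a j * (n.choose j * (n + j).choose j : ℤ) := by
  suffices IsChooseProdComb (fun n => chooseProd n k ^ r) (r * k) from this
  induction r with
  | zero => exact ⟨fun _ => 1, fun n => by simp [chooseProd]⟩
  | succ r ih => simpa only [pow_succ, add_mul, one_mul] using ih.mul_chooseProd k

/-- Schmidt-type integrality for `f(n,k) = C(n,k)·C(n+k,k)`. -/
theorem stmt_5 (k r : ℕ) (hr : 1 ≤ r) :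
    ∃ a : ℕ → ℤ, ∀ n : ℕ,
      ((n.choose k * (n + k).choose k : ℤ)) ^ r =
        ∑ j ∈ Finset.range (r * k + 1),
          a j * (n.choose j * (n + j).choose j : ℤ) :=
  stmt_5_general k r
end

section
/- For every nonnegative integer k and every integer r ≥ 1 there exist integers a_{k,0}, a_{k,1}, …, a_{k,rk} such that for all nonnegative integers n: C(n+k,k)^r = Σ_{j=0}^{r·k} a_{k,j}·C(n+j,j). -/
/-!
`n ↦ C(n+k,k)^r` is a rational polynomial of degree `r k` in `n`, so its `(r k + 1)`-st forward
difference vanishes. An integer-valued `f` with `Δ^D f = 0` lies in the `ℤ`-span of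
`n ↦ C(n+j,j)`, `j < D`: by induction, `Δ f = ∑ b_j C(n+j,j)` integrates to
`f = f 0 + ∑ b_j C(n+j,j+1)`, and `C(n+j,j+1) = C(n+j+1,j+1) - C(n+j,j)`.
-/

open Finset Polynomial fwdDiff

section ForwardDifference

variable {M M' G G' : Type*} [AddCommMonoid M] [AddCommMonoid M'] [AddCommGroup G]
  [AddCommGroup G']

theorem map_fwdDiff_iter (ψ : G →+ G') (h : M) (f : M → G) (m : ℕ) (x : M) :
    ψ (Δ_[h] ^[m] f x) = Δ_[h] ^[m] (ψ ∘ f) x := by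
  simp [fwdDiff_iter_eq_sum_shift, map_sum, map_zsmul]

theorem fwdDiff_iter_comp_addMonoidHom (φ : M →+ M') (h : M) (g : M' → G) (m : ℕ) (x : M) :
    Δ_[h] ^[m] (g ∘ φ) x = Δ_[φ h] ^[m] g (φ x) := by
  simp [fwdDiff_iter_eq_sum_shift, map_add, map_nsmul]

theorem eq_of_fwdDiff_eq {f g : ℕ → G} (h₀ : f 0 = g 0) (h : Δ_[1] f = Δ_[1] g) : f = g := by
  funext n
  induction n with
  | zero => exact h₀
  | succ n ih =>
    have hn := congrFun h n
    simp only [fwdDiff, ih] at hn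
    exact sub_left_injective hn

end ForwardDifference

theorem fwdDiff_iter_eq_zero_of_eval_natCast {R : Type*} [CommRing R] [CharZero R] {f : ℕ → ℤ}
    {P : R[X]} (hf : ∀ n : ℕ, (f n : R) = P.eval (n : R)) {m : ℕ} (hm : P.natDegree < m) :
    Δ_[1] ^[m] f = 0 := by
  funext x
  apply Int.cast_injective (α := R)
  have hcomp : Int.castAddHom R ∘ f = P.eval ∘ Nat.castAddMonoidHom R := funext hf
  have := map_fwdDiff_iter (Int.castAddHom R) 1 f m x
  rw [hcomp, fwdDiff_iter_comp_addMonoidHom, Nat.coe_castAddMonoidHom, Nat.cast_one,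
    fwdDiff_iter_eq_zero_of_degree_lt hm] at this
  simpa using this

theorem exists_natDegree_le_eval_eq_choose (k : ℕ) :
    ∃ P : ℚ[X], P.natDegree ≤ k ∧ ∀ n : ℕ, ((n + k).choose k : ℚ) = P.eval (n : ℚ) := by
  refine ⟨C (k.factorial : ℚ)⁻¹ * (ascPochhammer ℚ k).comp (X + C 1), ?_, fun n => ?_⟩
  · refine (natDegree_C_mul_le _ _).trans ?_
    rw [natDegree_comp, natDegree_X_add_C, mul_one, ascPochhammer_natDegree]
  · have : (ascPochhammer ℚ k).eval ((n : ℚ) + 1) = (n + 1).ascFactorial k := by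
      rw [← Nat.cast_succ, ← ascPochhammer_eval_cast, ascPochhammer_nat_eq_ascFactorial]
    rw [eval_mul, eval_C, eval_comp, eval_add, eval_X, eval_C, this,
      Nat.ascFactorial_eq_factorial_mul_choose, Nat.cast_mul,
      inv_mul_cancel_left₀ (by exact_mod_cast k.factorial_ne_zero)]

def binomialSpan (D : ℕ) : Submodule ℤ (ℕ → ℤ) where
  carrier := {f | ∃ a : ℕ → ℤ, ∀ n, f n = ∑ j ∈ range D, a j * (n + j).choose j}
  add_mem' := by
    rintro f g ⟨a, ha⟩ ⟨b, hb⟩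
    exact ⟨a + b, fun n => by simp [ha, hb, add_mul, sum_add_distrib]⟩
  zero_mem' := ⟨0, by simp⟩
  smul_mem' := by
    rintro c f ⟨a, ha⟩
    exact ⟨c • a, fun n => by simp [ha, mul_sum, mul_assoc]⟩

theorem choose_mem_binomialSpan {j D : ℕ} (hj : j < D) :
    (fun n => ((n + j).choose j : ℤ)) ∈ binomialSpan D :=
  ⟨fun i => if i = j then 1 else 0, fun n => by simp [mem_range.mpr hj]⟩

theorem const_mem_binomialSpan (c : ℤ) {D : ℕ} (hD : 0 < D) :
    (fun _ => c) ∈ binomialSpan D := by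
  convert (binomialSpan D).smul_mem c (choose_mem_binomialSpan hD) using 1
  funext n
  simp

theorem choose_succ_mem_binomialSpan {j D : ℕ} (hj : j < D) :
    (fun n => ((n + j).choose (j + 1) : ℤ)) ∈ binomialSpan (D + 1) := by
  have hpascal : (fun n => ((n + j).choose (j + 1) : ℤ)) =
      (fun n => ((n + (j + 1)).choose (j + 1) : ℤ)) - fun n => ((n + j).choose j : ℤ) := by
    funext n
    simp [← add_assoc, Nat.choose_succ_succ']
  rw [hpascal]
  exact sub_mem (choose_mem_binomialSpan (by omega)) (choose_mem_binomialSpan (by omega))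

theorem mem_binomialSpan_of_fwdDiff_iter_eq_zero {D : ℕ} {f : ℕ → ℤ}
    (hf : Δ_[1] ^[D] f = 0) : f ∈ binomialSpan D := by
  induction D generalizing f with
  | zero =>
    rw [Function.iterate_zero, id] at hf
    exact hf ▸ zero_mem _
  | succ D ih =>
    obtain ⟨b, hb⟩ := ih (f := Δ_[1] f) (by rwa [← Function.iterate_succ_apply])
    have hsum : f = (fun _ => f 0) +
        ∑ j ∈ range D, b j • fun n => ((n + j).choose (j + 1) : ℤ) := by
      refine eq_of_fwdDiff_eq (by simp) (funext fun n => ?_)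
      rw [hb n]
      simp only [fwdDiff, Pi.add_apply, Finset.sum_apply, Pi.smul_apply, smul_eq_mul,
        add_sub_add_left_eq_sub, ← sum_sub_distrib, ← mul_sub]
      refine sum_congr rfl fun j _ => ?_
      rw [add_right_comm, Nat.choose_succ_succ', Nat.cast_add, add_sub_cancel_right]
    rw [hsum]
    exact add_mem (const_mem_binomialSpan _ D.succ_pos) (sum_mem fun j hj =>
      Submodule.smul_mem _ _ (choose_succ_mem_binomialSpan (mem_range.mp hj)))

theorem stmt_8_general (k r : ℕ) :
    ∃ a : ℕ → ℤ, ∀ n : ℕ,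
      (((n + k).choose k : ℤ)) ^ r =
        ∑ j ∈ Finset.range (r * k + 1), a j * ((n + j).choose j : ℤ) := by
  obtain ⟨P, hdeg, hP⟩ := exists_natDegree_le_eval_eq_choose k
  have hΔ : Δ_[1] ^[r * k + 1] (fun n => ((n + k).choose k : ℤ) ^ r) = 0 :=
    fwdDiff_iter_eq_zero_of_eval_natCast (P := P ^ r) (fun n => by simp [hP])
      (Nat.lt_succ_of_le (natDegree_pow_le.trans (Nat.mul_le_mul_left r hdeg)))
  exact mem_binomialSpan_of_fwdDiff_iter_eq_zero hΔ

/-- Schmidt-type integrality for `f(n,k) = C(n+k,k)`. -/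
theorem stmt_8 (k r : ℕ) (hr : 1 ≤ r) :
    ∃ a : ℕ → ℤ, ∀ n : ℕ,
      (((n + k).choose k : ℤ)) ^ r =
        ∑ j ∈ Finset.range (r * k + 1), a j * ((n + j).choose j : ℤ) :=
  stmt_8_general k r
end

section
/- Let K = ℚ(q) be the field of rational functions over ℚ in the indeterminate q. Let f : ℕ × ℕ → K, S : ℕ × ℕ × ℕ → K with S(k,j,i) = 0 for j > i+k, and A : ℕ × ℕ × ℕ × ℕ → ℤ satisfy f(n,i)·f(n,k) = Σ_{j=0}^{i+k} q^{A(k,j,i,n)}·S(k,j,i)·f(n,j) for all n, i, k ≥ 0. Let B : ℕ × ℕ × ℕ → ℤ and C : ℕ × ℕ × ℕ × ℕ → ℤ satisfy B(k,j,i) + C(k,j,r+1,n) = A(k,j,i,n) + C(k,i,r,n) for all k,j,i,n ≥ 0 and r ≥ 1, and C(k,k,1,n) = 0 for all k, n ≥ 0. Define P^{(r)}_{k,j} ∈ K recursively by P^{(1)}_{k,k} = 1, P^{(1)}_{k,j} = 0 for j ≠ k, and P^{(r+1)}_{k,j} = Σ_{i=0}^{r·k} q^{B(k,j,i)}·S(k,j,i)·P^{(r)}_{k,i}.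 Then for all k ≥ 0, r ≥ 1 and n ≥ 0: f(n,k)^r = Σ_{j=0}^{r·k} q^{C(k,j,r,n)}·f(n,j)·P^{(r)}_{k,j}. -/
/-!
Induction on `r`. Multiplying the expansion of `f k ^ r` by `f k` and expanding each product
`f i * f k` by the product rule gives a double sum; since `S j i = 0` for `j > i + k`, all inner
sums may be taken over `j ≤ (r + 1) * k`. Exchanging the two sums, the relation between `A`, `B`
and `C` moves the power of `q` out of the inner sum, which is then the recursion defining `P`.
-/

open Finset

section PowerExpansion

variable {K : Type*} [Field K] {q : K} {k : ℕ} {f : ℕ → K} {S : ℕ → ℕ → K}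
  {A B C : ℕ → ℕ → ℤ} {P : ℕ → ℕ → K}

theorem mul_eq_sum_range_of_le (hS : ∀ j i, i + k < j → S j i = 0)
    (hf : ∀ i, f i * f k = ∑ j ∈ range (i + k + 1), q ^ A j i * S j i * f j)
    {i m : ℕ} (him : i + k ≤ m) :
    f i * f k = ∑ j ∈ range (m + 1), q ^ A j i * S j i * f j := by
  rw [hf]
  refine sum_subset (range_subset_range.2 (by omega)) fun j hjm hjik => ?_
  rw [mem_range] at hjm hjik
  rw [hS j i (by omega), mul_zero, zero_mul]

theorem pow_one_eq_sum_range (hC : C k 1 = 0) (hP : ∀ j, P 1 j = if j = k then 1 else 0) :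
    f k ^ 1 = ∑ j ∈ range (1 * k + 1), q ^ C j 1 * f j * P 1 j := by
  rw [sum_eq_single_of_mem k (mem_range.2 (by omega)) fun j _ hjk => by simp [hP, hjk]]
  simp [hP, hC]

theorem pow_succ_eq_sum_range (hq : q ≠ 0) (hS : ∀ j i, i + k < j → S j i = 0)
    (hf : ∀ i, f i * f k = ∑ j ∈ range (i + k + 1), q ^ A j i * S j i * f j) {r : ℕ}
    (hBC : ∀ j i, B j i + C j (r + 1) = A j i + C i r)
    (hP : ∀ j, P (r + 1) j = ∑ i ∈ range (r * k + 1), q ^ B j i * S j i * P r i)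
    (ih : f k ^ r = ∑ i ∈ range (r * k + 1), q ^ C i r * f i * P r i) :
    f k ^ (r + 1) = ∑ j ∈ range ((r + 1) * k + 1), q ^ C j (r + 1) * f j * P (r + 1) j := by
  have hexpand : ∀ i ∈ range (r * k + 1), q ^ C i r * f i * P r i * f k =
      ∑ j ∈ range ((r + 1) * k + 1), q ^ C i r * P r i * (q ^ A j i * S j i * f j) := by
    intro i hi
    have hik : i + k ≤ (r + 1) * k := by
      rw [mem_range] at hi
      nlinarith
    rw [← mul_sum, ← mul_eq_sum_range_of_le hS hf hik]
    ring
  have hexp : ∀ j i, q ^ C i r * q ^ A j i = q ^ B j i * q ^ C j (r + 1) := by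
    intro j i
    rw [← zpow_add₀ hq, ← zpow_add₀ hq, hBC, add_comm]
  rw [pow_succ, ih, sum_mul, sum_congr rfl hexpand, sum_comm]
  refine sum_congr rfl fun j _ => ?_
  rw [hP, mul_sum]
  refine sum_congr rfl fun i _ => ?_
  linear_combination (P r i * S j i * f j) * hexp j i

theorem pow_eq_sum_range (hq : q ≠ 0) (hS : ∀ j i, i + k < j → S j i = 0)
    (hf : ∀ i, f i * f k = ∑ j ∈ range (i + k + 1), q ^ A j i * S j i * f j)
    (hBC : ∀ r, 1 ≤ r → ∀ j i, B j i + C j (r + 1) = A j i + C i r) (hC : C k 1 = 0)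
    (hP1 : ∀ j, P 1 j = if j = k then 1 else 0)
    (hP : ∀ r, 1 ≤ r → ∀ j, P (r + 1) j = ∑ i ∈ range (r * k + 1), q ^ B j i * S j i * P r i)
    {r : ℕ} (hr : 1 ≤ r) :
    f k ^ r = ∑ j ∈ range (r * k + 1), q ^ C j r * f j * P r j := by
  induction r, hr using Nat.le_induction with
  | base => exact pow_one_eq_sum_range hC hP1
  | succ r hr ih => exact pow_succ_eq_sum_range hq hS hf (hBC r hr) (hP r hr) ih

end PowerExpansion

open RatFunc in
/-- Theorem 3.1 of the paper (general $q$-analog), in the field `ℚ(q) = RatFunc ℚ`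
with `q = RatFunc.X`. -/
theorem stmt_9 (f : ℕ × ℕ → RatFunc ℚ) (S : ℕ × ℕ × ℕ → RatFunc ℚ)
    (A : ℕ × ℕ × ℕ × ℕ → ℤ)
    (hS : ∀ k j i : ℕ, j > i + k → S (k, j, i) = 0)
    (hf : ∀ n i k : ℕ,
      f (n, i) * f (n, k) =
        ∑ j ∈ Finset.range (i + k + 1),
          (RatFunc.X : RatFunc ℚ) ^ A (k, j, i, n) * S (k, j, i) * f (n, j))
    (B : ℕ × ℕ × ℕ → ℤ) (C : ℕ × ℕ × ℕ × ℕ → ℤ)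
    (hBC : ∀ k j i n r : ℕ, 1 ≤ r →
      B (k, j, i) + C (k, j, r + 1, n) = A (k, j, i, n) + C (k, i, r, n))
    (hC1 : ∀ k n : ℕ, C (k, k, 1, n) = 0)
    (P : ℕ → ℕ → ℕ → RatFunc ℚ)
    (hP_init : ∀ k j : ℕ, P 1 k j = if j = k then 1 else 0)
    (hP_rec : ∀ r k j : ℕ, 1 ≤ r →
      P (r + 1) k j =
        ∑ i ∈ Finset.range (r * k + 1),
          (RatFunc.X : RatFunc ℚ) ^ B (k, j, i) * S (k, j, i) * P r k i) :
    ∀ k r n : ℕ, 1 ≤ r →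
      f (n, k) ^ r =
        ∑ j ∈ Finset.range (r * k + 1),
          (RatFunc.X : RatFunc ℚ) ^ C (k, j, r, n) * f (n, j) * P r k j := by
  intro k r n hr
  exact pow_eq_sum_range (f := fun j => f (n, j)) (S := fun j i => S (k, j, i))
    (A := fun j i => A (k, j, i, n)) (B := fun j i => B (k, j, i))
    (C := fun j s => C (k, j, s, n)) (P := fun s j => P s k j) X_ne_zero
    (fun j i => hS k j i) (fun i => hf n i k) (fun s hs j i => hBC k j i n s hs) (hC1 k n)
    (hP_init k) (fun s hs j => hP_rec s k j hs) hr
end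

section
/- In the field ℚ(q), for all nonnegative integers n, i, k: [n,i]·[n+i,i]·[n,k]·[n+k,k] = Σ_{j=0}^{i+k} q^{(n-j)(k+i-j)}·[i+k,i]·Mq(j;i,k)·[n,j]·[n+j,j]. -/
/-- The $q$-factorial `(q)_n = (1-q)(1-q²)⋯(1-qⁿ)` in `ℚ(q) = RatFunc ℚ`. -/
noncomputable def qfac (n : ℕ) : RatFunc ℚ :=
  ∏ m ∈ Finset.range n, (1 - (RatFunc.X : RatFunc ℚ) ^ (m + 1))

/-- The Gaussian binomial coefficient `[n, k]` in `ℚ(q)`. -/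
noncomputable def qbinom (n k : ℕ) : RatFunc ℚ :=
  if k ≤ n then qfac n / (qfac k * qfac (n - k)) else 0

/-- The $q$-multinomial coefficient `Mq(j; i, k)` in `ℚ(q)`: it equals
`(q)_j/((q)_{j-i}(q)_{j-k}(q)_{i+k-j})` when `max i k ≤ j ≤ i + k`, and `0`
otherwise. -/
noncomputable def qmulti (j i k : ℕ) : RatFunc ℚ :=
  if i ≤ j ∧ k ≤ j ∧ j ≤ i + k then
    qfac j / (qfac (j - i) * qfac (j - k) * qfac (i + k - j))
  else 0

/-! Both sides of the identity, as functions of `n`, satisfy the first-order recurrence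
`(1 - q^(n+1-i)) (1 - q^(n+1-k)) F(n+1) = (1 - q^(n+1+i)) (1 - q^(n+1+k)) F(n)`.
For the left side this is immediate; for the sum it is the Wilf–Zeilberger method: each summand
satisfies the recurrence up to a difference `G(j) - G(j+1)` of an explicit certificate, which
telescopes to zero over `0 ≤ j ≤ i + k`. The leading coefficient does not vanish for
`n ≥ max i k`, so it suffices to compare at `n = max i k`, where only the term `j = n` survives;
for `n < max i k` both sides vanish. -/

open Finset

theorem eq_of_mul_succ_eq_mul {M : Type*} [Mul M] [Zero M] [IsLeftCancelMulZero M]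
    {f g a b : ℕ → M} {m : ℕ}
    (ha : ∀ n ≥ m, a n ≠ 0) (hf : ∀ n ≥ m, a n * f (n + 1) = b n * f n)
    (hg : ∀ n ≥ m, a n * g (n + 1) = b n * g n) (hm : f m = g m) {n : ℕ} (hn : m ≤ n) :
    f n = g n := by
  induction n, hn using Nat.le_induction with
  | base => exact hm
  | succ n hn ih => exact mul_left_cancel₀ (ha n hn) (by rw [hf n hn, hg n hn, ih])

namespace RatFunc

variable {K : Type*} [Field K]

lemma X_zpow_ne_one {m : ℤ} (hm : m ≠ 0) : (X : RatFunc K) ^ m ≠ 1 := by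
  classical
  intro h
  simpa [hm] using congrArg (inftyValuation K) h

lemma one_sub_X_zpow_ne_zero {m : ℤ} (hm : m ≠ 0) : 1 - (X : RatFunc K) ^ m ≠ 0 :=
  sub_ne_zero.2 (X_zpow_ne_one hm).symm

end RatFunc

open RatFunc

local notation "q" => (RatFunc.X : RatFunc ℚ)

lemma qfac_succ (n : ℕ) : qfac (n + 1) = qfac n * (1 - q ^ (n + 1)) :=
  prod_range_succ _ _

lemma qfac_ne_zero (n : ℕ) : qfac n ≠ 0 :=
  prod_ne_zero_iff.2 fun m _ => by
    exact_mod_cast one_sub_X_zpow_ne_zero (K := ℚ) (m := m + 1) (by omega)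

/-- `1 / (q)_m`, set to zero for `m < 0`: then `qfacInv_sub_one` holds for every integer `m`, and
`[n, k]` and `Mq(j; i, k)` become products of these without case distinctions. -/
noncomputable def qfacInv (m : ℤ) : RatFunc ℚ :=
  if 0 ≤ m then (qfac m.toNat)⁻¹ else 0

lemma qfacInv_natCast (m : ℕ) : qfacInv m = (qfac m)⁻¹ := by
  simp [qfacInv]

lemma qfacInv_of_neg {m : ℤ} (hm : m < 0) : qfacInv m = 0 := by
  simp [qfacInv, hm.not_ge]

lemma qfacInv_zero : qfacInv 0 = 1 := by
  simp [qfacInv, qfac]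

lemma qfacInv_sub_one (m : ℤ) : qfacInv (m - 1) = (1 - q ^ m) * qfacInv m := by
  obtain hm | rfl | hm := lt_trichotomy m 0
  · rw [qfacInv_of_neg hm, qfacInv_of_neg (by omega), mul_zero]
  · simp [qfacInv_of_neg]
  · obtain ⟨m, rfl⟩ : ∃ m' : ℕ, m = m' + 1 := ⟨(m - 1).toNat, by omega⟩
    rw [add_sub_cancel_right, ← Nat.cast_succ, qfacInv_natCast, qfacInv_natCast, qfac_succ,
      mul_inv_rev, zpow_natCast, mul_inv_cancel_left₀]
    exact_mod_cast one_sub_X_zpow_ne_zero (m := (m : ℤ) + 1) (by omega)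

lemma qbinom_eq_qfacInv (n k : ℕ) : qbinom n k = qfac n * qfacInv k * qfacInv (n - k) := by
  unfold qbinom
  split_ifs with h
  · rw [← Nat.cast_sub h, qfacInv_natCast, qfacInv_natCast, div_eq_mul_inv, mul_inv, mul_assoc]
  · rw [qfacInv_of_neg (m := n - k) (by omega), mul_zero]

lemma qmulti_eq_qfacInv (j i k : ℕ) :
    qmulti j i k = qfac j * qfacInv (j - i) * qfacInv (j - k) * qfacInv (i + k - j) := by
  unfold qmulti
  split_ifs with h
  · obtain ⟨hi, hk, hj⟩ := h
    rw [← Nat.cast_sub hi, ← Nat.cast_sub hk, ← Nat.cast_add, ← Nat.cast_sub hj, qfacInv_natCast,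
      qfacInv_natCast, qfacInv_natCast, div_eq_mul_inv, mul_inv, mul_inv]
    ring
  · have : (j : ℤ) - i < 0 ∨ (j : ℤ) - k < 0 ∨ (i : ℤ) + k - j < 0 := by omega
    rcases this with h | h | h <;> simp [qfacInv_of_neg h]

lemma qbinom_eq_zero {n k : ℕ} (h : n < k) : qbinom n k = 0 := if_neg h.not_ge

lemma qmulti_eq_zero {j i k : ℕ} (h : j < max i k) : qmulti j i k = 0 :=
  if_neg (by omega)

lemma qmulti_self_left (i k : ℕ) : qmulti i i k = qbinom i k := by
  rw [qmulti_eq_qfacInv, qbinom_eq_qfacInv, sub_self, qfacInv_zero, add_sub_cancel_left]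
  ring

lemma qmulti_self_right (i k : ℕ) : qmulti k i k = qbinom k i := by
  rw [qmulti_eq_qfacInv, qbinom_eq_qfacInv, sub_self, qfacInv_zero, add_sub_cancel_right]
  ring

lemma qbinom_add_comm (a b : ℕ) : qbinom (a + b) a = qbinom (a + b) b := by
  rw [qbinom_eq_qfacInv, qbinom_eq_qfacInv, Nat.cast_add, add_sub_cancel_left, add_sub_cancel_right]
  ring

noncomputable def schmidtTerm (n i k j : ℕ) : RatFunc ℚ :=
  q ^ (((n : ℤ) - j) * ((k : ℤ) + i - j)) * (qbinom (i + k) i * qmulti j i k) * qbinom n j *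
    qbinom (n + j) j

lemma schmidtTerm_eq_qfacInv (n i k j : ℕ) :
    schmidtTerm n i k j = q ^ (((n : ℤ) - j) * ((k : ℤ) + i - j)) * qbinom (i + k) i *
      qfac (n + j) * qfacInv j * qfacInv (j - i) * qfacInv (j - k) * qfacInv (i + k - j) *
      qfacInv (n - j) := by
  rw [schmidtTerm, qmulti_eq_qfacInv, qbinom_eq_qfacInv n, qbinom_eq_qfacInv (n + j), Nat.cast_add,
    add_sub_cancel_right, qfacInv_natCast n, qfacInv_natCast j]
  field_simp [qfac_ne_zero]

noncomputable def schmidtCert (n i k j : ℕ) : RatFunc ℚ :=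
  q ^ (((i : ℤ) + k + 1 - j) * ((n : ℤ) + 1 - j)) * (1 + q ^ (n + 1)) * qbinom (i + k) i *
    qfac (n + j) * qfacInv (j - 1) * qfacInv (j - i - 1) * qfacInv (j - k - 1) *
    qfacInv (i + k - j) * qfacInv (n + 1 - j)

lemma schmidtTerm_succ_sub (n i k j : ℕ) :
    (1 - q ^ ((n : ℤ) + 1 - i)) * (1 - q ^ ((n : ℤ) + 1 - k)) * schmidtTerm (n + 1) i k j -
        (1 - q ^ ((n : ℤ) + 1 + i)) * (1 - q ^ ((n : ℤ) + 1 + k)) * schmidtTerm n i k j =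
      schmidtCert n i k j - schmidtCert n i k (j + 1) := by
  have hq : q ≠ 0 := RatFunc.X_ne_zero
  -- Bring every `qfacInv` to one of the arguments `j, j - i, j - k, i + k - j, n + 1 - j` and every
  -- power of `q` to `q ^ ((n - j) * (k + i - j))` times a Laurent monomial in `q, qⁿ, qⁱ, qᵏ, qʲ`;
  -- what remains is a polynomial identity.
  rw [schmidtTerm_eq_qfacInv, schmidtTerm_eq_qfacInv, schmidtCert, schmidtCert,
    show n + 1 + j = n + j + 1 by ring, show n + (j + 1) = n + j + 1 by ring, qfac_succ]
  push_cast
  rw [show ((n : ℤ) + 1 - j) * (k + i - j) = ((n : ℤ) - j) * (k + i - j) + (k + i - j) by ring,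
    show ((i : ℤ) + k + 1 - j) * (n + 1 - j) =
      ((n : ℤ) - j) * (k + i - j) + ((k + i - j) + (n - j) + 1) by ring,
    show ((i : ℤ) + k + 1 - (j + 1)) * (n + 1 - (j + 1)) = ((n : ℤ) - j) * (k + i - j) by ring]
  simp only [zpow_add₀ hq, zpow_sub₀ hq, zpow_natCast, zpow_one]
  rw [show (j : ℤ) + 1 - 1 = j by ring, show (j : ℤ) + 1 - i - 1 = j - i by ring,
    show (j : ℤ) + 1 - k - 1 = j - k by ring, show (i : ℤ) + k - (j + 1) = i + k - j - 1 by ring,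
    show (n : ℤ) + 1 - (j + 1) = n + 1 - j - 1 by ring, show (n : ℤ) - j = n + 1 - j - 1 by ring,
    qfacInv_sub_one (j : ℤ), qfacInv_sub_one ((j : ℤ) - i), qfacInv_sub_one ((j : ℤ) - k),
    qfacInv_sub_one ((i : ℤ) + k - j), qfacInv_sub_one ((n : ℤ) + 1 - j)]
  simp only [zpow_add₀ hq, zpow_sub₀ hq, zpow_natCast, zpow_one]
  field_simp
  ring

lemma qbinom_mul_qbinom_add (n i : ℕ) :
    qbinom n i * qbinom (n + i) i = qfac (n + i) * qfacInv i ^ 2 * qfacInv (n - i) := by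
  rw [qbinom_eq_qfacInv, qbinom_eq_qfacInv, Nat.cast_add, add_sub_cancel_right, qfacInv_natCast n]
  field_simp [qfac_ne_zero]

lemma qbinom_mul_qbinom_add_succ (n i : ℕ) :
    (1 - q ^ ((n : ℤ) + 1 - i)) * (qbinom (n + 1) i * qbinom (n + 1 + i) i) =
      (1 - q ^ ((n : ℤ) + 1 + i)) * (qbinom n i * qbinom (n + i) i) := by
  rw [qbinom_mul_qbinom_add, qbinom_mul_qbinom_add, show n + 1 + i = n + i + 1 by ring, qfac_succ,
    show (n : ℤ) - i = n + 1 - i - 1 by ring, qfacInv_sub_one,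
    show (n : ℤ) + 1 + i = (n + i + 1 : ℕ) by push_cast; ring, zpow_natCast]
  push_cast
  ring

lemma sum_schmidtTerm_succ (n i k : ℕ) :
    (1 - q ^ ((n : ℤ) + 1 - i)) * (1 - q ^ ((n : ℤ) + 1 - k)) *
        ∑ j ∈ range (i + k + 1), schmidtTerm (n + 1) i k j =
      (1 - q ^ ((n : ℤ) + 1 + i)) * (1 - q ^ ((n : ℤ) + 1 + k)) *
        ∑ j ∈ range (i + k + 1), schmidtTerm n i k j := by
  have h0 : schmidtCert n i k 0 = 0 := by simp [schmidtCert, qfacInv_of_neg]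
  have hlast : schmidtCert n i k (i + k + 1) = 0 := by simp [schmidtCert, qfacInv_of_neg]
  rw [← sub_eq_zero, mul_sum, mul_sum, ← sum_sub_distrib]
  simp only [schmidtTerm_succ_sub]
  rw [sum_range_sub', h0, hlast, sub_zero]

lemma schmidtTerm_eq_zero {n i k j : ℕ} (h : j < max i k ∨ n < j) : schmidtTerm n i k j = 0 := by
  rcases h with h | h
  · simp [schmidtTerm, qmulti_eq_zero h]
  · simp [schmidtTerm, qbinom_eq_zero h]

lemma qbinom_prod_succ (n i k : ℕ) :
    (1 - q ^ ((n : ℤ) + 1 - i)) * (1 - q ^ ((n : ℤ) + 1 - k)) *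
        (qbinom (n + 1) i * qbinom (n + 1 + i) i * qbinom (n + 1) k * qbinom (n + 1 + k) k) =
      (1 - q ^ ((n : ℤ) + 1 + i)) * (1 - q ^ ((n : ℤ) + 1 + k)) *
        (qbinom n i * qbinom (n + i) i * qbinom n k * qbinom (n + k) k) := by
  linear_combination
    ((1 - q ^ ((n : ℤ) + 1 - k)) * (qbinom (n + 1) k * qbinom (n + 1 + k) k)) *
        qbinom_mul_qbinom_add_succ n i +
      ((1 - q ^ ((n : ℤ) + 1 + i)) * (qbinom n i * qbinom (n + i) i)) *
        qbinom_mul_qbinom_add_succ n k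

lemma schmidt_identity_of_lt_max {n i k : ℕ} (hn : n < max i k) :
    qbinom n i * qbinom (n + i) i * qbinom n k * qbinom (n + k) k =
      ∑ j ∈ range (i + k + 1), schmidtTerm n i k j := by
  rw [sum_eq_zero fun j _ => schmidtTerm_eq_zero (by omega)]
  rcases lt_max_iff.1 hn with h | h <;> simp [qbinom_eq_zero h]

lemma schmidt_identity_max (i k : ℕ) :
    qbinom (max i k) i * qbinom (max i k + i) i * qbinom (max i k) k * qbinom (max i k + k) k =
      ∑ j ∈ range (i + k + 1), schmidtTerm (max i k) i k j := by
  rw [sum_eq_single_of_mem (max i k) (mem_range.2 (by omega))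
    fun j _ hj => schmidtTerm_eq_zero (by omega)]
  rcases le_total k i with h | h
  · rw [max_eq_left h, schmidtTerm, qmulti_self_left, qbinom_add_comm i k]
    simp only [sub_self, zero_mul, zpow_zero, one_mul]
    ring
  · rw [max_eq_right h, schmidtTerm, qmulti_self_right, add_comm i k]
    simp only [sub_self, zero_mul, zpow_zero, one_mul]
    ring

/-- Result 3.1.1 ($q$-analog of Schmidt's identity). -/
theorem stmt_10 (n i k : ℕ) :
    qbinom n i * qbinom (n + i) i * qbinom n k * qbinom (n + k) k =
      ∑ j ∈ Finset.range (i + k + 1),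
        (RatFunc.X : RatFunc ℚ) ^ (((n : ℤ) - j) * ((k : ℤ) + i - j)) *
          (qbinom (i + k) i * qmulti j i k) * qbinom n j * qbinom (n + j) j := by
  obtain hn | hn := lt_or_ge n (max i k)
  · exact schmidt_identity_of_lt_max hn
  refine eq_of_mul_succ_eq_mul
    (a := fun n => (1 - q ^ ((n : ℤ) + 1 - i)) * (1 - q ^ ((n : ℤ) + 1 - k)))
    (b := fun n => (1 - q ^ ((n : ℤ) + 1 + i)) * (1 - q ^ ((n : ℤ) + 1 + k)))
    (f := fun n => qbinom n i * qbinom (n + i) i * qbinom n k * qbinom (n + k) k)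
    (g := fun n => ∑ j ∈ range (i + k + 1), schmidtTerm n i k j)
    (fun n hn =>
      mul_ne_zero (one_sub_X_zpow_ne_zero (by omega)) (one_sub_X_zpow_ne_zero (by omega)))
    (fun n _ => qbinom_prod_succ n i k) (fun n _ => sum_schmidtTerm_succ n i k)
    (schmidt_identity_max i k) hn
end
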